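/- arXiv:1901.06429 — 7 statements merged into one kernel-verified Lean document; each statement's English description precedes it below -/
import Mathlib

section
/- Let (α_m) be a sequence of reals strictly decreasing to 0 such that the difference sequence α_m − α_{m+1} is nonincreasing. Let I = (a,b) be a bounded open interval of length l = b − a, let δ > 0, m₀ ≥ 1, and suppose M ≥ m₀ is an integer such that δ(α_m − α_{m+1}) ≥ l for all m₀ ≤ m ≤ M − 1 and δ(α_m − α_{m+1}) < l for all m ≥ M. Then: (1) the translates I − δα_m for m₀ ≤ m ≤ M − 1 are pairwise disjoint; (2) the union ⋃_{m=M}^∞ (I − δα_m) equals the single open interval (a − δα_M, b); and (3) this interval is disjoint from each I − δα_m with m₀ ≤ m ≤ M − 1. -/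
open Set Filter

theorem structure_of_translates
    (α : ℕ → ℝ) (hanti : StrictAnti α) (hlim : Tendsto α atTop (nhds 0))
    (hdiff : ∀ m, α (m + 1) - α (m + 2) ≤ α m - α (m + 1))
    (a b δ : ℝ) (hab : a < b) (hδ : 0 < δ)
    (m₀ M : ℕ) (hm₀ : 1 ≤ m₀) (hM : m₀ ≤ M)
    (hbig : ∀ m, m₀ ≤ m → m < M → b - a ≤ δ * (α m - α (m + 1)))
    (hsmall : ∀ m, M ≤ m → δ * (α m - α (m + 1)) < b - a) :
    (∀ m m', m₀ ≤ m → m < m' → m' < M →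
        Disjoint ((fun x => x - δ * α m) '' Ioo a b)
          ((fun x => x - δ * α m') '' Ioo a b)) ∧
    (⋃ m, ⋃ (_ : M ≤ m), (fun x => x - δ * α m) '' Ioo a b)
        = Ioo (a - δ * α M) b ∧
    (∀ m, m₀ ≤ m → m < M →
        Disjoint ((fun x => x - δ * α m) '' Ioo a b) (Ioo (a - δ * α M) b)) := by
  -- positivity of α
  have hpos : ∀ m, 0 < α m := by
    intro m
    have h1 : 0 ≤ α (m + 1) := by
      refine le_of_tendsto hlim ?_
      filter_upwards [eventually_ge_atTop (m + 1)] with k hk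
      exact hanti.antitone hk
    linarith [hanti (Nat.lt_succ_self m)]
  have himg : ∀ m, (fun x => x - δ * α m) '' Ioo a b
      = Ioo (a - δ * α m) (b - δ * α m) := by
    intro m
    exact image_sub_const_Ioo _ _ _
  -- key separation lemma
  have hsep : ∀ m m', m₀ ≤ m → m < m' → m' ≤ M → b - δ * α m ≤ a - δ * α m' := by
    intro m m' h1 h2 h3
    have hb := hbig m h1 (lt_of_lt_of_le h2 h3)
    have hmono : α m' ≤ α (m + 1) := hanti.antitone h2
    nlinarith
  refine ⟨?_, ?_, ?_⟩
  · intro m m' h1 h2 h3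
    rw [himg, himg]
    rw [Ioo_disjoint_Ioo]
    exact le_trans (min_le_left _ _) (le_trans (hsep m m' h1 h2 h3.le) (le_max_right _ _))
  · ext x
    simp only [mem_iUnion, himg, mem_Ioo]
    constructor
    · rintro ⟨m, hm, hx1, hx2⟩
      have h1 : α m ≤ α M := hanti.antitone hm
      have h2 : 0 < α m := hpos m
      constructor
      · nlinarith
      · nlinarith
    · rintro ⟨hx1, hx2⟩
      have hex : ∃ n, M ≤ n ∧ δ * α n < b - x := by
        have ht : Tendsto (fun n => δ * α n) atTop (nhds 0) := by
          simpa using hlim.const_mul δ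
        have := (ht.eventually (eventually_lt_nhds (by linarith : (0:ℝ) < b - x))).and
          (eventually_ge_atTop M)
        obtain ⟨n, hn1, hn2⟩ := this.exists
        exact ⟨n, hn2, hn1⟩
      classical
      obtain ⟨m, ⟨hmM, hmQ⟩, hmin⟩ :
          ∃ m, (M ≤ m ∧ δ * α m < b - x) ∧ ∀ k, k < m → ¬(M ≤ k ∧ δ * α k < b - x) :=
        ⟨Nat.find hex, Nat.find_spec hex, fun k hk => Nat.find_min hex hk⟩
      refine ⟨m, hmM, ?_, by linarith⟩
      rcases eq_or_lt_of_le hmM with h | h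
      · rw [← h]; linarith
      · obtain ⟨k, rfl⟩ : ∃ k, m = k + 1 :=
          ⟨m - 1, (Nat.succ_pred_eq_of_pos (Nat.zero_lt_of_lt h)).symm⟩
        have hkM : M ≤ k := Nat.lt_succ_iff.mp h
        have hknot := hmin k (Nat.lt_succ_self k)
        rw [not_and] at hknot
        have hkQ : ¬ δ * α k < b - x := hknot hkM
        push_neg at hkQ
        have := hsmall k hkM
        nlinarith
  · intro m h1 h2
    rw [himg]
    rw [Ioo_disjoint_Ioo]
    exact le_trans (min_le_left _ _) (le_trans (hsep m M h1 h2 le_rfl) (le_max_right _ _))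
end

section
/- Let (α_m) be strictly decreasing to 0 with nonincreasing differences, I = (a,b) an open interval of length l, δ > 0, and M an integer such that δ(α_m − α_{m+1}) < l for all m ≥ M. Then ⋃_{m=M}^∞ (I − δα_m) = B₋(I, δα_M), the left δα_M-neighbourhood of I. -/
open Set Filter

/-- The left `r`-neighbourhood of a set `S ⊆ ℝ`. -/
def leftNbhd (S : Set ℝ) (r : ℝ) : Set ℝ :=
  {y | ∃ x ∈ S, ∃ t : ℝ, 0 ≤ t ∧ t < r ∧ y = x - t}

theorem overlapping_part_eq_leftNbhd
    (α : ℕ → ℝ) (hanti : StrictAnti α) (hlim : Tendsto α atTop (nhds 0))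
    (hdiff : ∀ m, α (m + 1) - α (m + 2) ≤ α m - α (m + 1))
    (a b δ : ℝ) (hab : a < b) (hδ : 0 < δ) (M : ℕ)
    (hsmall : ∀ m, M ≤ m → δ * (α m - α (m + 1)) < b - a) :
    (⋃ m, ⋃ (_ : M ≤ m), (fun x => x - δ * α m) '' Ioo a b)
      = leftNbhd (Ioo a b) (δ * α M) := by
  have hpos : ∀ m, 0 < α m := by
    intro m
    have h0 : 0 ≤ α (m + 1) :=
      le_of_tendsto hlim (eventually_atTop.2 ⟨m + 1, fun k hk => hanti.antitone hk⟩)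
    linarith [hanti (Nat.lt_succ_self m)]
  have hr : 0 < δ * α M := mul_pos hδ (hpos M)
  have h1 : leftNbhd (Ioo a b) (δ * α M) = Ioo (a - δ * α M) b := by
    ext y
    constructor
    · rintro ⟨x, ⟨hax, hxb⟩, t, ht0, htr, rfl⟩
      exact ⟨by linarith, by linarith⟩
    · rintro ⟨hy1, hy2⟩
      have hlt : max a y < min b (y + δ * α M) :=
        lt_min (max_lt hab hy2) (max_lt (by linarith) (by linarith))
      set x := (max a y + min b (y + δ * α M)) / 2 with hx
      have h1 := le_max_left a y
      have h2 := le_max_right a y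
      have h3 := min_le_left b (y + δ * α M)
      have h4 := min_le_right b (y + δ * α M)
      refine ⟨x, ⟨by simp only [hx]; linarith, by simp only [hx]; linarith⟩,
        x - y, by simp only [hx]; linarith, by simp only [hx]; linarith, by ring⟩
  rw [h1]
  ext y
  simp only [mem_iUnion, mem_image, mem_Ioo]
  constructor
  · rintro ⟨m, hm, x, ⟨hax, hxb⟩, rfl⟩
    have hle : δ * α m ≤ δ * α M := mul_le_mul_of_nonneg_left (hanti.antitone hm) hδ.le
    have hmpos : 0 < δ * α m := mul_pos hδ (hpos m)
    exact ⟨by linarith, by linarith⟩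
  · rintro ⟨hy1, hy2⟩
    have hten : Tendsto (fun m => δ * α m) atTop (nhds 0) := by
      simpa using hlim.const_mul δ
    have hev : ∀ᶠ m in atTop, δ * α m < b - y :=
      hten.eventually_lt_const (by linarith)
    have hex : ∃ m, M ≤ m ∧ δ * α m < b - y := by
      obtain ⟨m, h1', h2'⟩ := ((eventually_ge_atTop M).and hev).exists
      exact ⟨m, h1', h2'⟩
    obtain ⟨hmM, hmlt⟩ : M ≤ Nat.find hex ∧ δ * α (Nat.find hex) < b - y := Nat.find_spec hex
    set m := Nat.find hex with hmdef
    have hax : a < y + δ * α m := by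
      rcases eq_or_lt_of_le hmM with h | h
      · rw [← h]; linarith
      · have hm1 : M ≤ m - 1 := by omega
        have hnot := Nat.find_min hex (show m - 1 < m by omega)
        push_neg at hnot
        have hge : b - y ≤ δ * α (m - 1) := hnot hm1
        have hs := hsmall (m - 1) hm1
        have heq : m - 1 + 1 = m := by omega
        rw [heq, mul_sub] at hs
        linarith
    exact ⟨m, hmM, y + δ * α m, ⟨hax, by linarith⟩, by ring⟩
end

section
/- Let E ⊆ ℝ be a set with the property that for every sequence (α_m) of reals strictly decreasing to 0 there exist t ∈ ℝ and δ ≠ 0 such that t + δα_m ∈ E for all m. Then E is somewhere dense, i.e., the closure of E contains a nondegenerate open interval. -/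
/-!
Suppose `closure E` has empty interior. For a compact set `K` of pairs `(t, δ)` with `δ ≠ 0` and
an interval `I`, each `{β | t + δ * β ∉ closure E}` is open and dense, so compactness gives a finite
`B ⊆ I` such that no `t + δ * B` with `(t, δ) ∈ K` lies in `closure E`. Doing this for compact sets
`Kₙ` exhausting `ℝ × (ℝ \ {0})` with `Iₙ = (0, 1/(n+1))` and listing `⋃ Bₙ` in decreasing order
gives a null sequence of which `E` contains no affine copy.
-/

open Set Filter Topology

def ContainsAffineCopy (E : Set ℝ) (α : ℕ → ℝ) : Prop :=
  ∃ t δ : ℝ, δ ≠ 0 ∧ ∀ m, t + δ * α m ∈ E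

theorem exists_isGreatest_inter_Iio {s : Set ℝ} (hpos : s ⊆ Ioi 0)
    (hfin : ∀ ε > 0, (s ∩ Ici ε).Finite) (hsmall : ∀ ε > 0, ∃ x ∈ s, x < ε) {x : ℝ} (hx : 0 < x) :
    ∃ y, IsGreatest (s ∩ Iio x) y := by
  obtain ⟨z, hzs, hzx⟩ := hsmall x hx
  obtain ⟨y, ⟨hy, hzy⟩, hmax⟩ := exists_max_image (s ∩ Iio x ∩ Ici z) id
    ((hfin z (hpos hzs)).subset fun w hw => ⟨hw.1.1, hw.2⟩) ⟨z, ⟨hzs, hzx⟩, mem_Ici.2 le_rfl⟩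
  refine ⟨y, hy, fun w hw => ?_⟩
  rcases le_or_gt z w with hzw | hwz
  · exact hmax w ⟨hw, hzw⟩
  · exact hwz.le.trans hzy

theorem exists_strictAnti_tendsto_zero_subset_range {s : Set ℝ} (hpos : s ⊆ Ioi 0)
    (hfin : ∀ ε > 0, (s ∩ Ici ε).Finite) (hsmall : ∀ ε > 0, ∃ x ∈ s, x < ε) :
    ∃ α : ℕ → ℝ, StrictAnti α ∧ Tendsto α atTop (𝓝 0) ∧ s ⊆ range α := by
  obtain ⟨x₀, hx₀_pos, hx₀⟩ : ∃ x₀ : ℝ, 0 < x₀ ∧ s ⊆ Iio x₀ := by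
    obtain ⟨b, hb⟩ := (hfin 1 one_pos).bddAbove
    refine ⟨max b 1 + 1, by positivity, fun z hz => mem_Iio.2 ?_⟩
    rcases le_or_gt 1 z with h1 | h1
    · linarith [hb (show z ∈ s ∩ Ici 1 from ⟨hz, h1⟩), le_max_left b 1]
    · linarith [le_max_right b 1]
  choose! next hnext using fun x (hx : 0 < x) => exists_isGreatest_inter_Iio hpos hfin hsmall hx
  let α : ℕ → ℝ := fun m => Nat.rec (next x₀) (fun _ a => next a) m
  have hα_zero : IsGreatest (s ∩ Iio x₀) (α 0) := hnext x₀ hx₀_pos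
  have hα_mem : ∀ m, α m ∈ s := by
    intro m
    induction m with
    | zero => exact hα_zero.1.1
    | succ m ih => exact (hnext (α m) (hpos ih)).1.1
  have hα_succ : ∀ m, IsGreatest (s ∩ Iio (α m)) (α (m + 1)) :=
    fun m => hnext (α m) (hpos (hα_mem m))
  have hα_anti : StrictAnti α := strictAnti_nat_of_succ_lt fun m => (hα_succ m).1.2
  have hα_lt : ∀ ε > 0, ∀ᶠ m in atTop, α m < ε := by
    intro ε hε
    have hfinite := ((hfin ε hε).preimage hα_anti.injective.injOn).eventually_cofinite_notMem
    rw [Nat.cofinite_eq_atTop] at hfinite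
    exact hfinite.mono fun m hm => not_le.1 fun h => hm ⟨hα_mem m, h⟩
  refine ⟨α, hα_anti, tendsto_order.2 ⟨fun c hc => .of_forall fun m => hc.trans (hpos (hα_mem m)),
    hα_lt⟩, fun a ha => ?_⟩
  have hex : ∃ m, α m ≤ a := ((hα_lt a (hpos ha)).exists).imp fun _ => le_of_lt
  obtain ⟨k, hk, hk_min⟩ : ∃ k, α k ≤ a ∧ ∀ j < k, a < α j := by
    classical exact ⟨Nat.find hex, Nat.find_spec hex, fun j hj => not_le.1 (Nat.find_min hex hj)⟩
  refine ⟨k, hk.antisymm ?_⟩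
  cases k with
  | zero => exact hα_zero.2 ⟨ha, hx₀ ha⟩
  | succ m => exact (hα_succ m).2 ⟨ha, hk_min m m.lt_succ_self⟩

theorem exists_strictAnti_tendsto_zero_iUnion_subset_range {B : ℕ → Set ℝ}
    (hB : ∀ n : ℕ, B n ⊆ Ioo 0 (1 / (n + 1))) (hfin : ∀ n, (B n).Finite) :
    ∃ α : ℕ → ℝ, StrictAnti α ∧ Tendsto α atTop (𝓝 0) ∧ ⋃ n, B n ⊆ range α := by
  set C : ℕ → Set ℝ := fun n => insert ((1 : ℝ) / (n + 2)) (B n)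
  have hC : ∀ n : ℕ, C n ⊆ Ioo 0 (1 / (n + 1)) := fun n =>
    insert_subset_iff.2 ⟨⟨by positivity, one_div_lt_one_div_of_lt (by positivity) (by linarith)⟩,
      hB n⟩
  have hCfin : ∀ n, (C n).Finite := fun n => (hfin n).insert _
  have hpos : ⋃ n, C n ⊆ Ioi 0 := iUnion_subset fun n => (hC n).trans Ioo_subset_Ioi_self
  have hsmall : ∀ ε > 0, ∃ x ∈ ⋃ n, C n, x < ε := fun ε hε => by
    obtain ⟨n, hn⟩ := exists_nat_one_div_lt hε
    exact ⟨_, mem_iUnion_of_mem n (mem_insert _ _), (hC n (mem_insert _ _)).2.trans hn⟩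
  have hCfin_Ici : ∀ ε > 0, ((⋃ n, C n) ∩ Ici ε).Finite := fun ε hε => by
    obtain ⟨N, hN⟩ := exists_nat_one_div_lt hε
    refine ((finite_Iio N).biUnion fun n _ => hCfin n).subset ?_
    rintro x ⟨hx, hεx : ε ≤ x⟩
    obtain ⟨n, hxn⟩ := mem_iUnion.1 hx
    refine mem_biUnion (?_ : n < N) hxn
    by_contra! hNn
    have : (1 : ℝ) / (n + 1) ≤ 1 / (N + 1) :=
      one_div_le_one_div_of_le (by positivity) (by exact_mod_cast Nat.add_le_add_right hNn 1)
    linarith [(hC n hxn).2]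
  obtain ⟨α, hα_anti, hα_lim, hα_range⟩ :=
    exists_strictAnti_tendsto_zero_subset_range hpos hCfin_Ici hsmall
  exact ⟨α, hα_anti, hα_lim, (iUnion_mono fun n => subset_insert _ _).trans hα_range⟩

theorem dense_setOf_add_mul_notMem {F : Set ℝ} (hF : interior F = ∅) {t δ : ℝ} (hδ : δ ≠ 0) :
    Dense {β | t + δ * β ∉ F} :=
  (interior_eq_empty_iff_dense_compl.1 hF).preimage
    ((Homeomorph.mulLeft₀ δ hδ).trans (Homeomorph.addLeft t)).isOpenMap

theorem IsCompact.exists_finite_subset_Ioo_forall_add_mul_notMem {F : Set ℝ} (hF : IsClosed F)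
    (hF' : interior F = ∅) {K : Set (ℝ × ℝ)} (hK : IsCompact K) (hK0 : K ⊆ {p | p.2 ≠ 0})
    {a b : ℝ} (hab : a < b) :
    ∃ B ⊆ Ioo a b, B.Finite ∧ ∀ p ∈ K, ∃ β ∈ B, p.1 + p.2 * β ∉ F := by
  have hopen : ∀ β : ℝ, IsOpen {p : ℝ × ℝ | p.1 + p.2 * β ∉ F} := fun β =>
    hF.isOpen_compl.preimage (by fun_prop)
  have hcover : K ⊆ ⋃ β ∈ Ioo a b, {p : ℝ × ℝ | p.1 + p.2 * β ∉ F} := fun p hp => by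
    obtain ⟨β, hβ, hβF⟩ := (dense_setOf_add_mul_notMem hF' (hK0 hp)).inter_open_nonempty _
      isOpen_Ioo (nonempty_Ioo.2 hab)
    exact mem_biUnion hβ hβF
  obtain ⟨B, hBsub, hBfin, hBcover⟩ := hK.elim_finite_subcover_image (fun β _ => hopen β) hcover
  exact ⟨B, hBsub, hBfin, fun p hp => by simpa using hBcover hp⟩

theorem isSigmaCompact_setOf_snd_ne_zero : IsSigmaCompact {p : ℝ × ℝ | p.2 ≠ 0} := by
  have hU : IsOpen {p : ℝ × ℝ | p.2 ≠ 0} := isOpen_ne_fun continuous_snd continuous_const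
  have := hU.locallyCompactSpace
  simpa using (isSigmaCompact_univ (X := {p : ℝ × ℝ | p.2 ≠ 0})).image continuous_subtype_val

theorem IsNowhereDense.exists_strictAnti_tendsto_not_containsAffineCopy {E : Set ℝ}
    (hE : IsNowhereDense E) :
    ∃ α : ℕ → ℝ, StrictAnti α ∧ Tendsto α atTop (𝓝 0) ∧ ¬ContainsAffineCopy E α := by
  obtain ⟨K, hK, hKU⟩ := isSigmaCompact_setOf_snd_ne_zero
  have hK0 : ∀ n, K n ⊆ {p | p.2 ≠ 0} := fun n => hKU ▸ subset_iUnion K n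
  choose B hB hBfin hBescape using fun n : ℕ =>
    (hK n).exists_finite_subset_Ioo_forall_add_mul_notMem isClosed_closure hE (hK0 n)
      (b := 1 / (n + 1)) (by positivity)
  obtain ⟨α, hα_anti, hα_lim, hα_range⟩ :=
    exists_strictAnti_tendsto_zero_iUnion_subset_range hB hBfin
  refine ⟨α, hα_anti, hα_lim, fun ⟨t, δ, hδ, hmem⟩ => ?_⟩
  obtain ⟨n, hn⟩ := mem_iUnion.1 (hKU.symm ▸ hδ : (t, δ) ∈ ⋃ n, K n)
  obtain ⟨β, hβB, hβ⟩ := hBescape n (t, δ) hn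
  obtain ⟨m, rfl⟩ := hα_range (mem_iUnion_of_mem n hβB)
  exact hβ (subset_closure (hmem m))

theorem somewhere_dense_of_contains_all_decreasing (E : Set ℝ)
    (h : ∀ α : ℕ → ℝ, StrictAnti α → Tendsto α atTop (nhds 0) →
      ∃ t δ : ℝ, δ ≠ 0 ∧ ∀ m, t + δ * α m ∈ E) :
    ∃ a b : ℝ, a < b ∧ Ioo a b ⊆ closure E := by
  have hE : ¬IsNowhereDense E := fun hE =>
    let ⟨α, hα_anti, hα_lim, hα⟩ := hE.exists_strictAnti_tendsto_not_containsAffineCopy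
    hα (h α hα_anti hα_lim)
  obtain ⟨a, b, hab, hsub⟩ := isOpen_interior.exists_Ioo_subset (nonempty_iff_ne_empty.2 hE)
  exact ⟨a, b, hab, hsub.trans interior_subset⟩
end

section
/- Let (β_m) be a sequence of reals strictly decreasing to 0. Then there exists a sequence (η_m) of reals strictly decreasing to 0 such that β_m ≤ η_m for all m and the difference sequence is nonincreasing: η_m − η_{m+1} ≥ η_{m+1} − η_{m+2} for all m ≥ 1. -/
/-! The majorant is a superposition of hinges `η m = ∑ j, c j * (n j - m)⁺`. Each hinge is convex,
nonincreasing and eventually zero, hence so is the sum once the heights `c j * n j` are summable,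
and the sum is strictly decreasing as long as every `m` lies under some active hinge.
Take `ε j = β 0 / 2 ^ j` and `N j` with `β ≤ ε j` from `N j` on. Hinge `j` has height `2 ε j` and
ends at `2 N (j + 1)`, so on `N j ≤ m < N (j + 1)` it is at least `ε j ≥ β m`. -/

open Filter Topology

/-- `n j - m` is truncated subtraction, so each summand is the hinge `c j * (n j - m)⁺`. -/
noncomputable def hingeSum (c : ℕ → ℝ) (n : ℕ → ℕ) (m : ℕ) : ℝ :=
  ∑' j, c j * ((n j - m : ℕ) : ℝ)

lemma hinge_sub_succ (c : ℝ) (n m : ℕ) :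
    c * ((n - m : ℕ) : ℝ) - c * ((n - (m + 1) : ℕ) : ℝ) = if m < n then c else 0 := by
  split_ifs with h
  · rw [show n - m = n - (m + 1) + 1 by omega]
    push_cast
    ring
  · rw [Nat.sub_eq_zero_of_le (not_lt.mp h), Nat.sub_eq_zero_of_le (by omega)]
    simp

lemma hinge_le_height {c : ℝ} (hc : 0 ≤ c) (n m : ℕ) : c * ((n - m : ℕ) : ℝ) ≤ c * n :=
  mul_le_mul_of_nonneg_left (by exact_mod_cast Nat.sub_le n m) hc

section hingeSum

variable {c : ℕ → ℝ} {n : ℕ → ℕ}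

lemma summable_hinge (hc : ∀ j, 0 ≤ c j) (hs : Summable fun j => c j * n j) (m : ℕ) :
    Summable fun j => c j * ((n j - m : ℕ) : ℝ) :=
  hs.of_nonneg_of_le (fun j => mul_nonneg (hc j) (Nat.cast_nonneg _))
    fun j => hinge_le_height (hc j) (n j) m

lemma summable_slope (hc : ∀ j, 0 ≤ c j) (hs : Summable fun j => c j * n j) (m : ℕ) :
    Summable fun j => if m < n j then c j else 0 :=
  ((summable_hinge hc hs m).sub (summable_hinge hc hs (m + 1))).congr
    fun j => hinge_sub_succ (c j) (n j) m

lemma hingeSum_sub_succ (hc : ∀ j, 0 ≤ c j) (hs : Summable fun j => c j * n j) (m : ℕ) :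
    hingeSum c n m - hingeSum c n (m + 1) = ∑' j, if m < n j then c j else 0 := by
  rw [hingeSum, hingeSum, ← (summable_hinge hc hs m).tsum_sub (summable_hinge hc hs (m + 1))]
  exact tsum_congr fun j => hinge_sub_succ (c j) (n j) m

lemma hingeSum_sub_succ_le (hc : ∀ j, 0 ≤ c j) (hs : Summable fun j => c j * n j) (m : ℕ) :
    hingeSum c n (m + 1) - hingeSum c n (m + 2) ≤ hingeSum c n m - hingeSum c n (m + 1) := by
  rw [hingeSum_sub_succ hc hs, hingeSum_sub_succ hc hs]
  refine (summable_slope hc hs (m + 1)).tsum_le_tsum (fun j => ?_) (summable_slope hc hs m)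
  split_ifs <;> first | exact le_rfl | exact hc j | omega

lemma le_hingeSum (hc : ∀ j, 0 ≤ c j) (hs : Summable fun j => c j * n j) (m j : ℕ) :
    c j * ((n j - m : ℕ) : ℝ) ≤ hingeSum c n m :=
  (summable_hinge hc hs m).le_tsum j fun k _ => mul_nonneg (hc k) (Nat.cast_nonneg _)

lemma hingeSum_strictAnti (hc : ∀ j, 0 ≤ c j) (hs : Summable fun j => c j * n j)
    (hpos : ∀ m, ∃ j, 0 < c j * ((n j - m : ℕ) : ℝ)) : StrictAnti (hingeSum c n) := by
  refine strictAnti_nat_of_succ_lt fun m => sub_pos.mp ?_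
  obtain ⟨j, hj⟩ := hpos m
  have hmj : m < n j := by
    by_contra h
    simp [Nat.sub_eq_zero_of_le (not_lt.mp h)] at hj
  rw [hingeSum_sub_succ hc hs]
  refine (summable_slope hc hs m).tsum_pos (fun k => ?_) j ?_
  · split_ifs
    exacts [hc k, le_rfl]
  · rw [if_pos hmj]
    exact pos_of_mul_pos_left hj (Nat.cast_nonneg _)

lemma tendsto_hingeSum (hc : ∀ j, 0 ≤ c j) (hs : Summable fun j => c j * n j) :
    Tendsto (hingeSum c n) atTop (𝓝 0) := by
  have key := tendsto_tsum_of_dominated_convergence (f := fun m j => c j * ((n j - m : ℕ) : ℝ))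
    (g := fun _ => 0) (𝓕 := atTop) hs ?_ ?_
  · rwa [tsum_zero] at key
  · intro j
    refine tendsto_const_nhds.congr' ?_
    filter_upwards [eventually_ge_atTop (n j)] with m hm
    simp [Nat.sub_eq_zero_of_le hm]
  · refine Eventually.of_forall fun m j => ?_
    rw [Real.norm_of_nonneg (mul_nonneg (hc j) (Nat.cast_nonneg _))]
    exact hinge_le_height (hc j) (n j) m

end hingeSum

lemma exists_hinges_above {β ε : ℕ → ℝ} (hβ : Antitone β) (hβlim : Tendsto β atTop (𝓝 0))
    (hβpos : ∀ m, 0 < β m) (hεpos : ∀ j, 0 < ε j) (hε : Summable ε) (hβε : β 0 ≤ ε 0) :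
    ∃ (c : ℕ → ℝ) (n : ℕ → ℕ), (∀ j, 0 ≤ c j) ∧ (Summable fun j => c j * n j) ∧
      ∀ m, ∃ j, β m ≤ c j * ((n j - m : ℕ) : ℝ) := by
  choose N hN using fun j => eventually_atTop.mp (hβlim.eventually (ge_mem_nhds (hεpos j)))
  have hc : ∀ j, 0 ≤ ε j / N (j + 1) := fun j => div_nonneg (hεpos j).le (Nat.cast_nonneg _)
  have height_le : ∀ j, ε j / N (j + 1) * ((2 * N (j + 1) : ℕ) : ℝ) ≤ 2 * ε j := by
    intro j
    rcases eq_or_ne (N (j + 1) : ℝ) 0 with h | h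
    · simp [h, (hεpos j).le]
    · push_cast
      exact le_of_eq (by field_simp)
  refine ⟨fun j => ε j / N (j + 1), fun j => 2 * N (j + 1), hc,
    (hε.mul_left 2).of_nonneg_of_le (fun j => mul_nonneg (hc j) (Nat.cast_nonneg _)) height_le,
    fun m => ?_⟩
  have hex : ∃ j, m < N (j + 1) := by
    obtain ⟨j, hj⟩ :=
      (hε.tendsto_atTop_zero.eventually (gt_mem_nhds (hβpos m))).exists_forall_of_atTop
    exact ⟨j, not_le.mp fun h => (hN (j + 1) m h).not_gt (hj (j + 1) (Nat.le_succ j))⟩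
  set j := Nat.find hex
  have hmN : m < N (j + 1) := Nat.find_spec hex
  have hβj : β m ≤ ε j := by
    rcases hj : j with _ | i
    · exact (hβ (Nat.zero_le m)).trans hβε
    · exact hN (i + 1) m (not_lt.mp (Nat.find_min hex (show i < j by omega)))
  have hN0 : (N (j + 1) : ℝ) ≠ 0 := by exact_mod_cast (Nat.zero_le m).trans_lt hmN |>.ne'
  refine ⟨j, hβj.trans ?_⟩
  calc ε j = ε j / N (j + 1) * N (j + 1) := (div_mul_cancel₀ _ hN0).symm
    _ ≤ ε j / N (j + 1) * ((2 * N (j + 1) - m : ℕ) : ℝ) := by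
      gcongr
      · exact hc j
      · omega

theorem exists_threshold_majorant (β : ℕ → ℝ) (hanti : StrictAnti β)
    (hlim : Tendsto β atTop (nhds 0)) :
    ∃ η : ℕ → ℝ, StrictAnti η ∧ Tendsto η atTop (nhds 0) ∧
      (∀ m, β m ≤ η m) ∧
      ∀ m, η (m + 1) - η (m + 2) ≤ η m - η (m + 1) := by
  have hβpos : ∀ m, 0 < β m := fun m =>
    (hanti.antitone.le_of_tendsto hlim (m + 1)).trans_lt (hanti m.lt_succ_self)
  obtain ⟨c, n, hc, hs, hβ⟩ := exists_hinges_above (ε := fun j => β 0 * (1 / 2) ^ j)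
    hanti.antitone hlim hβpos (fun j => by have := hβpos 0; positivity)
    (summable_geometric_two.mul_left (β 0)) (by simp)
  refine ⟨hingeSum c n, hingeSum_strictAnti hc hs fun m => ?_, tendsto_hingeSum hc hs,
    fun m => ?_, hingeSum_sub_succ_le hc hs⟩
  · obtain ⟨j, hj⟩ := hβ m
    exact ⟨j, (hβpos m).trans_le hj⟩
  · obtain ⟨j, hj⟩ := hβ m
    exact hj.trans (le_hingeSum hc hs m j)
end

section
/- Let (η_m) be a threshold sequence (strictly decreasing to 0 with nonincreasing differences), J = (a,b) an interval of length λ, and T the least positive integer m with η_m − η_{m+1} < λ. Then the Lebesgue measure of ⋃_{m=1}^∞ (J − η_m) equals T·λ + η_T. -/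
open Set Filter MeasureTheory

theorem measure_union_translates_threshold
    (η : ℕ → ℝ) (hpos : ∀ m, 0 < η m) (hanti : StrictAnti η)
    (hlim : Tendsto η atTop (nhds 0))
    (hdiff : ∀ m, η (m + 1) - η (m + 2) ≤ η m - η (m + 1))
    (a b : ℝ) (hab : a < b) (T : ℕ) (hT1 : 1 ≤ T)
    (hT : η T - η (T + 1) < b - a)
    (hTleast : ∀ m, 1 ≤ m → η m - η (m + 1) < b - a → T ≤ m) :
    volume (⋃ m, ⋃ (_ : 1 ≤ m), (fun x => x - η m) '' Ioo a b)
      = ENNReal.ofReal ((T : ℝ) * (b - a) + η T) := by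
  classical
  have himg : ∀ m : ℕ, (fun x => x - η m) '' Ioo a b = Ioo (a - η m) (b - η m) :=
    fun m => by rw [image_sub_const_Ioo]
  have hη : Antitone η := hanti.antitone
  have hd : Antitone (fun m => η m - η (m + 1)) := antitone_nat_of_succ_le fun n => hdiff n
  have hgap : ∀ m, T ≤ m → η m - η (m + 1) < b - a := fun m hm => lt_of_le_of_lt (hd hm) hT
  have hbig : ∀ m, 1 ≤ m → m < T → b - a ≤ η m - η (m + 1) := by
    intro m h1 h2
    by_contra h
    push_neg at h
    exact absurd (hTleast m h1 h) (not_le.2 h2)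
  -- key set equality
  have hset : (⋃ m, ⋃ (_ : 1 ≤ m), Ioo (a - η m) (b - η m))
      = (⋃ m ∈ Finset.Ico 1 T, Ioo (a - η m) (b - η m)) ∪ Ioo (a - η T) b := by
    ext x
    simp only [mem_iUnion, mem_union, Finset.mem_Ico, mem_Ioo, exists_prop]
    constructor
    · rintro ⟨m, h1, hx1, hx2⟩
      by_cases hm : m < T
      · exact Or.inl ⟨m, ⟨h1, hm⟩, hx1, hx2⟩
      · push_neg at hm
        refine Or.inr ⟨lt_of_le_of_lt ?_ hx1, hx2.trans (by linarith [hpos m])⟩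
        have := hη hm
        linarith
    · rintro (⟨m, ⟨h1, _⟩, hx⟩ | ⟨hx1, hx2⟩)
      · exact ⟨m, h1, hx⟩
      · have hex : ∃ m, T ≤ m ∧ x < b - η m := by
          have htend : Tendsto (fun m => b - η m) atTop (nhds b) := by
            simpa using tendsto_const_nhds.sub hlim
          have hev := htend.eventually (eventually_gt_nhds hx2)
          obtain ⟨N, hN⟩ := (hev.and (eventually_ge_atTop T)).exists
          exact ⟨N, hN.2, hN.1⟩
        let m := Nat.find hex
        obtain ⟨hmT, hxm⟩ : T ≤ m ∧ x < b - η m := Nat.find_spec hex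
        refine ⟨m, hT1.trans hmT, ?_, hxm⟩
        rcases eq_or_lt_of_le hmT with heq | hlt
        · rw [← heq]; exact hx1
        · have hm1 : T ≤ m - 1 := by omega
          have hnot : ¬(T ≤ m - 1 ∧ x < b - η (m - 1)) := Nat.find_min hex (by omega)
          have hxge : b - η (m - 1) ≤ x := by
            by_contra h
            exact hnot ⟨hm1, by linarith⟩
          have hm1s : m - 1 + 1 = m := by omega
          have := hgap (m - 1) hm1
          rw [hm1s] at this
          linarith
  rw [show (⋃ m, ⋃ (_ : 1 ≤ m), (fun x => x - η m) '' Ioo a b)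
      = (⋃ m, ⋃ (_ : 1 ≤ m), Ioo (a - η m) (b - η m)) by simp only [himg], hset]
  -- ordering facts for disjointness
  have horder : ∀ m n : ℕ, 1 ≤ m → m < n → n ≤ T → b - η m ≤ a - η n := by
    intro m n h1 hmn hnT
    have h2 : b - a ≤ η m - η (m + 1) := hbig m h1 (lt_of_lt_of_le hmn hnT)
    have h3 : η n ≤ η (m + 1) := hη hmn
    linarith
  have hdisj : Disjoint (⋃ m ∈ Finset.Ico 1 T, Ioo (a - η m) (b - η m)) (Ioo (a - η T) b) := by
    rw [disjoint_iUnion₂_left]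
    intro m hm
    rw [Finset.mem_Ico] at hm
    rw [Set.Ioo_disjoint_Ioo]
    exact min_le_of_left_le ((horder m T hm.1 hm.2 le_rfl).trans (le_max_right _ _))
  have hpd : (↑(Finset.Ico 1 T) : Set ℕ).PairwiseDisjoint
      (fun m => Ioo (a - η m) (b - η m)) := by
    intro m hm n hn hne
    simp only [Finset.coe_Ico, mem_Ico] at hm hn
    rcases hne.lt_or_gt with h | h
    · rw [Function.onFun, Set.Ioo_disjoint_Ioo]
      exact min_le_of_left_le ((horder m n hm.1 h (le_of_lt hn.2)).trans (le_max_right _ _))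
    · rw [Function.onFun, Set.Ioo_disjoint_Ioo]
      exact min_le_of_right_le ((horder n m hn.1 h (le_of_lt hm.2)).trans (le_max_left _ _))
  rw [measure_union hdisj measurableSet_Ioo,
    measure_biUnion_finset hpd (fun m _ => measurableSet_Ioo)]
  simp only [Real.volume_Ioo]
  have hcalc : ∀ m : ℕ, (b - η m) - (a - η m) = b - a := fun m => by ring
  simp only [hcalc]
  rw [Finset.sum_const, Nat.card_Ico, nsmul_eq_mul]
  have h1 : ((T - 1 : ℕ) : ENNReal) * ENNReal.ofReal (b - a)
      = ENNReal.ofReal (((T - 1 : ℕ) : ℝ) * (b - a)) := by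
    rw [ENNReal.ofReal_mul (Nat.cast_nonneg _), ENNReal.ofReal_natCast]
  rw [h1, show b - (a - η T) = (b - a) + η T by ring, ← ENNReal.ofReal_add (mul_nonneg (Nat.cast_nonneg _) (by linarith))
    (by linarith [hpos T] : (0:ℝ) ≤ (b - a) + η T)]
  congr 1
  have : ((T - 1 : ℕ) : ℝ) = (T : ℝ) - 1 := by
    push_cast [Nat.cast_sub hT1]; ring
  rw [this]; ring
end

section
/- Let (η_m) be a threshold sequence, J = (a,b) an interval of length λ, and T the least m with η_m − η_{m+1} < λ. Let δ₀ > 0 be such that a sequence (α_m) satisfies |α_m| ≤ η_m/(2δ₀) for all m. Then for every 0 < δ < δ₀, the Lebesgue measure of ⋃_{m=1}^∞ (J − δα_m) is at most T·λ + η_T, which equals the Lebesgue measure of ⋃_{m=1}^∞ (J − η_m). -/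
open Set Filter MeasureTheory

theorem measure_union_translates_le_threshold
    (η : ℕ → ℝ) (hpos : ∀ m, 0 < η m) (hanti : StrictAnti η)
    (hlim : Tendsto η atTop (nhds 0))
    (hdiff : ∀ m, η (m + 1) - η (m + 2) ≤ η m - η (m + 1))
    (a b : ℝ) (hab : a < b) (T : ℕ) (hT1 : 1 ≤ T)
    (hT : η T - η (T + 1) < b - a)
    (hTleast : ∀ m, 1 ≤ m → η m - η (m + 1) < b - a → T ≤ m)
    (δ₀ : ℝ) (hδ₀ : 0 < δ₀) (α : ℕ → ℝ)
    (hα : ∀ m, |α m| ≤ η m / (2 * δ₀)) :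
    ∀ δ : ℝ, 0 < δ → δ < δ₀ →
      volume (⋃ m, ⋃ (_ : 1 ≤ m), (fun x => x - δ * α m) '' Ioo a b)
        ≤ ENNReal.ofReal ((T : ℝ) * (b - a) + η T) ∧
      ENNReal.ofReal ((T : ℝ) * (b - a) + η T)
        = volume (⋃ m, ⋃ (_ : 1 ≤ m), (fun x => x - η m) '' Ioo a b) := by
  classical
  intro δ hδ hδδ₀
  have hL0 : 0 < b - a := sub_pos.2 hab
  -- differences are antitone
  have hd_anti : Antitone (fun m => η m - η (m + 1)) :=
    antitone_nat_of_succ_le (fun n => hdiff n)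
  have hd_lt : ∀ m, T ≤ m → η m - η (m + 1) < b - a :=
    fun m hm => lt_of_le_of_lt (hd_anti hm) hT
  have hd_ge : ∀ m, 1 ≤ m → m < T → b - a ≤ η m - η (m + 1) := by
    intro m h1 h2
    by_contra h
    exact absurd (hTleast m h1 (lt_of_not_ge h)) (not_le.2 h2)
  have hkey : ∀ m, 1 ≤ m → m < T → b - η m ≤ a - η (m + 1) := by
    intro m h1 h2
    have := hd_ge m h1 h2
    linarith
  -- arithmetic identity in ENNReal
  have harith : ENNReal.ofReal ((T : ℝ) * (b - a) + η T)
      = ((T - 1 : ℕ) : ENNReal) * ENNReal.ofReal (b - a)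
        + ENNReal.ofReal ((b - a) + η T) := by
    have h1 : (T : ℝ) * (b - a) + η T
        = ((T - 1 : ℕ) : ℝ) * (b - a) + ((b - a) + η T) := by
      rw [Nat.cast_sub hT1]
      push_cast
      ring
    have hηT := hpos T
    rw [h1, ENNReal.ofReal_add (mul_nonneg (Nat.cast_nonneg _) hL0.le) (by linarith),
      ENNReal.ofReal_mul (Nat.cast_nonneg _), ENNReal.ofReal_natCast]
  constructor
  · -- Part 1: upper bound
    have hbound : ∀ m, T ≤ m → |δ * α m| ≤ η T / 2 := by
      intro m hm
      have h1 : |α m| ≤ η m / (2 * δ₀) := hα m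
      have h2 : η m ≤ η T := hanti.antitone hm
      have h3 : |δ * α m| = δ * |α m| := by
        rw [abs_mul, abs_of_pos hδ]
      rw [h3]
      have h4 : δ * |α m| ≤ δ * (η m / (2 * δ₀)) :=
        mul_le_mul_of_nonneg_left h1 hδ.le
      have h5 : δ * (η m / (2 * δ₀)) ≤ η T / 2 := by
        have hδ₀' : (0:ℝ) < 2 * δ₀ := by positivity
        rw [mul_div_assoc', div_le_div_iff₀ hδ₀' (by norm_num : (0:ℝ) < 2)]
        nlinarith [hpos m, mul_le_mul hδδ₀.le h2 (hpos m).le hδ₀.le]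
      linarith
    have hsub : (⋃ m, ⋃ (_ : 1 ≤ m), (fun x => x - δ * α m) '' Ioo a b)
        ⊆ (⋃ m ∈ Finset.Ico 1 T, Ioo (a - δ * α m) (b - δ * α m))
          ∪ Ioo (a - η T / 2) (b + η T / 2) := by
      intro x hx
      simp only [mem_iUnion, image_sub_const_Ioo] at hx
      obtain ⟨m, hm1, hxm⟩ := hx
      rcases lt_or_ge m T with hmT | hmT
      · left
        exact mem_biUnion (Finset.mem_Ico.2 ⟨hm1, hmT⟩) hxm
      · right
        have hb := hbound m hmT
        have h1 : -(η T / 2) ≤ δ * α m := neg_le_of_abs_le hb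
        have h2 : δ * α m ≤ η T / 2 := le_of_abs_le hb
        refine Ioo_subset_Ioo (by linarith) (by linarith) hxm
    calc volume (⋃ m, ⋃ (_ : 1 ≤ m), (fun x => x - δ * α m) '' Ioo a b)
        ≤ volume ((⋃ m ∈ Finset.Ico 1 T, Ioo (a - δ * α m) (b - δ * α m))
            ∪ Ioo (a - η T / 2) (b + η T / 2)) := measure_mono hsub
      _ ≤ volume (⋃ m ∈ Finset.Ico 1 T, Ioo (a - δ * α m) (b - δ * α m))
            + volume (Ioo (a - η T / 2) (b + η T / 2)) := measure_union_le _ _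
      _ ≤ (∑ m ∈ Finset.Ico 1 T, volume (Ioo (a - δ * α m) (b - δ * α m)))
            + volume (Ioo (a - η T / 2) (b + η T / 2)) := by
          gcongr
          exact measure_biUnion_finset_le _ _
      _ = ((T - 1 : ℕ) : ENNReal) * ENNReal.ofReal (b - a)
            + ENNReal.ofReal ((b - a) + η T) := by
          congr 1
          · have : ∀ m ∈ Finset.Ico 1 T,
                volume (Ioo (a - δ * α m) (b - δ * α m))
                  = ENNReal.ofReal (b - a) := by
              intro m _
              rw [Real.volume_Ioo]
              congr 1; ring
            rw [Finset.sum_congr rfl this, Finset.sum_const, Nat.card_Ico,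
              nsmul_eq_mul]
          · rw [Real.volume_Ioo]
            congr 1
            ring
      _ = ENNReal.ofReal ((T : ℝ) * (b - a) + η T) := harith.symm
  · -- Part 2: exact value
    set f : ℕ → Set ℝ := fun m =>
      if m = T then Ioo (a - η T) b else Ioo (a - η m) (b - η m) with hf
    have hVeq : (⋃ m, ⋃ (_ : 1 ≤ m), (fun x => x - η m) '' Ioo a b)
        = ⋃ m ∈ Finset.Ico 1 (T + 1), f m := by
      ext x
      simp only [mem_iUnion, image_sub_const_Ioo, Finset.mem_Ico]
      constructor
      · rintro ⟨m, hm1, hxm⟩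
        rcases lt_or_ge m T with hmT | hmT
        · exact ⟨m, ⟨hm1, hmT.trans (Nat.lt_succ_self T)⟩, by
            simp only [hf, if_neg (Nat.ne_of_lt hmT)]; exact hxm⟩
        · refine ⟨T, ⟨hT1, Nat.lt_succ_self T⟩, ?_⟩
          simp only [hf, if_pos rfl]
          have h1 : η m ≤ η T := hanti.antitone hmT
          exact ⟨by linarith [hxm.1], by linarith [hxm.2, hpos m]⟩
      · rintro ⟨m, ⟨hm1, hmT⟩, hxm⟩
        rcases eq_or_ne m T with heq | hne
        · -- covering argument
          simp only [hf, if_pos heq] at hxm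
          obtain ⟨hx1, hx2⟩ := hxm
          have hbx : 0 < b - x := sub_pos.2 hx2
          have hev : ∀ᶠ n in atTop, η n < b - x := hlim.eventually_lt_const hbx
          obtain ⟨N, hN⟩ := eventually_atTop.1 hev
          have hPex : ∃ n, T ≤ n ∧ η n < b - x :=
            ⟨max T N, le_max_left _ _, hN _ (le_max_right _ _)⟩
          obtain ⟨hn1, hn2⟩ := Nat.find_spec hPex
          refine ⟨Nat.find hPex, le_trans hT1 hn1, ?_, by linarith⟩
          rcases eq_or_lt_of_le hn1 with heq | hlt
          · rw [← heq]; linarith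
          · obtain ⟨k, hk⟩ : ∃ k, Nat.find hPex = k + 1 :=
              ⟨Nat.find hPex - 1, by omega⟩
            have hkT : T ≤ k := by omega
            have hnk : ¬ (T ≤ k ∧ η k < b - x) :=
              Nat.find_min hPex (by omega)
            have hxk : b - x ≤ η k := by
              by_contra h
              exact hnk ⟨hkT, lt_of_not_ge h⟩
            have := hd_lt k hkT
            rw [hk]
            linarith
        · refine ⟨m, hm1, ?_⟩
          simpa only [hf, if_neg hne] using hxm
    rw [hVeq]
    have hdisjkey : ∀ m n : ℕ, 1 ≤ m → m < n → n ≤ T → Disjoint (f m) (f n) := by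
      intro m n hm1 hlt hnT
      have hmT : m < T := lt_of_lt_of_le hlt hnT
      rw [Set.disjoint_left]
      intro x hxm hxn
      simp only [hf, if_neg (Nat.ne_of_lt hmT)] at hxm
      have hx1 : x < b - η m := hxm.2
      have hx2 : a - η n < x := by
        rcases eq_or_ne n T with rfl | hne
        · simp only [hf, if_pos rfl] at hxn; exact hxn.1
        · simp only [hf, if_neg hne] at hxn; exact hxn.1
      have hkey1 : b - η m ≤ a - η (m + 1) := hkey m hm1 hmT
      have hle : η n ≤ η (m + 1) := hanti.antitone (by omega)
      linarith
    have hdisj : (↑(Finset.Ico 1 (T + 1)) : Set ℕ).PairwiseDisjoint f := by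
      intro m hm n hn hmn
      simp only [Finset.coe_Ico, mem_Ico] at hm hn
      rcases hmn.lt_or_gt with h | h
      · exact hdisjkey m n hm.1 h (by omega)
      · exact (hdisjkey n m hn.1 h (by omega)).symm
    rw [measure_biUnion_finset hdisj (fun i _ => by
      by_cases h : i = T <;> simp only [hf, h, if_pos, if_neg, ite_true,
        ite_false] <;> exact measurableSet_Ioo)]
    rw [Finset.sum_Ico_succ_top hT1]
    have hfT : volume (f T) = ENNReal.ofReal ((b - a) + η T) := by
      simp only [hf, if_pos rfl, Real.volume_Ioo]
      congr 1; ring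
    have hrest : ∀ m ∈ Finset.Ico 1 T, volume (f m) = ENNReal.ofReal (b - a) := by
      intro m hm
      obtain ⟨_, h2⟩ := Finset.mem_Ico.1 hm
      simp only [hf, if_neg (Nat.ne_of_lt h2), Real.volume_Ioo]
      congr 1; ring
    rw [Finset.sum_congr rfl hrest, Finset.sum_const, Nat.card_Ico,
      nsmul_eq_mul, hfT, harith]
end

section
/- Let (β_m) be any sequence of reals strictly decreasing to 0. Then there exists a closed, nowhere dense set A ⊆ [0,1] such that for every sequence (α_m) converging to 0 with |α_m| = O(β_m), there exist δ > 0 and t ∈ ℝ with t + δα_m ∈ A for all m. -/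
open Set Filter

/-!
Take `A = [0,1] ∩ ⋂ₖ Sₖ`, where `Sₖ` has period `Lₖ = 2⁻ᵏ` and misses an open gap of length
`gₖ > 0` in each period; gaps at all scales make `A` nowhere dense. After rescaling `α` to
`γ = δα` with `|γₘ| ≤ βₘ`, a translation `t` has to be found. At level `k` the indices split at an
`nₖ` with `β nₖ ≤ rₖ`: for `m ≥ nₖ` it suffices that `t` lies at distance `rₖ` from the gaps, and
each of the finitely many `m < nₖ` excludes the gaps translated by `-γₘ`. In `[1/4, 3/4]` these
exclusions have measure `O((rₖ + nₖ gₖ) / Lₖ)`, which is at most `2⁻ᵏ / 8` for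
`gₖ = rₖ / (nₖ + 1)` and `rₖ = 2⁻ᵏ⁻⁶ Lₖ`. The total is below `1/2`, so some `t` survives all
levels.
-/

open MeasureTheory Pointwise
open AddSubgroup (zmultiples)

theorem mem_add_zmultiples_iff {s : Set ℝ} {L x : ℝ} :
    x ∈ s + (zmultiples L : Set ℝ) ↔ ∃ j : ℤ, x - j * L ∈ s := by
  simp only [Set.mem_add, SetLike.mem_coe, AddSubgroup.mem_zmultiples_iff, zsmul_eq_mul]
  constructor
  · rintro ⟨y, hy, _, ⟨j, rfl⟩, rfl⟩
    exact ⟨j, by simpa using hy⟩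
  · rintro ⟨j, hj⟩
    exact ⟨_, hj, _, ⟨j, rfl⟩, sub_add_cancel x _⟩

theorem isClosed_Icc_add_zmultiples (a b L : ℝ) :
    IsClosed (Icc a b + (zmultiples L : Set ℝ)) :=
  AddSubgroup.isClosed_of_discrete.add_left_of_isCompact isCompact_Icc

theorem add_mem_Icc_add_of_abs_le {T : Set ℝ} {a b r t γ : ℝ} (ht : t ∈ Icc (a + r) (b - r) + T)
    (hγ : |γ| ≤ r) : t + γ ∈ Icc a b + T := by
  obtain ⟨y, ⟨hy₁, hy₂⟩, z, hz, rfl⟩ := ht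
  obtain ⟨hγ₁, hγ₂⟩ := abs_le.mp hγ
  exact ⟨y + γ, ⟨by linarith, by linarith⟩, z, hz, add_right_comm y γ z⟩

theorem mem_Icc_add_zmultiples_or_mem_Ioo_add_zmultiples {L : ℝ} (hL : 0 < L) (a b x : ℝ) :
    x ∈ Icc a b + (zmultiples L : Set ℝ) ∨ x ∈ Ioo b (a + L) + (zmultiples L : Set ℝ) := by
  simp only [mem_add_zmultiples_iff]
  set j := ⌊(x - a) / L⌋
  have h₁ : j * L ≤ x - a := (le_div_iff₀ hL).mp (Int.floor_le _)
  have h₂ : x - a < (j + 1) * L := (div_lt_iff₀ hL).mp (Int.lt_floor_add_one _)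
  rcases le_or_gt (x - j * L) b with h | h
  · exact .inl ⟨j, by linarith, h⟩
  · exact .inr ⟨j, h, by linarith⟩

theorem exists_abs_sub_le_notMem_Icc_add_zmultiples {L a b : ℝ} (hL : 0 < L) (hab : b < a + L)
    (x : ℝ) : ∃ y, |y - x| ≤ L ∧ y ∉ Icc a b + (zmultiples L : Set ℝ) := by
  -- the midpoint of a gap, translated to within `L` of `x`
  set c := (b + a + L) / 2 with hc
  set j := ⌊(x - c) / L⌋
  have h₁ : j * L ≤ x - c := (le_div_iff₀ hL).mp (Int.floor_le _)
  have h₂ : x - c < (j + 1) * L := (div_lt_iff₀ hL).mp (Int.lt_floor_add_one _)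
  refine ⟨c + j * L, abs_le.mpr ⟨by linarith, by linarith⟩, ?_⟩
  rw [mem_add_zmultiples_iff]
  rintro ⟨i, hi₁, hi₂⟩
  have hlt : ((j : ℝ) - i) * L < 0 * L := by linarith
  have hgt : -1 * L < ((j : ℝ) - i) * L := by linarith
  have : (-1 : ℝ) < j - i ∧ (j : ℝ) - i < 0 :=
    ⟨lt_of_mul_lt_mul_right hgt hL.le, lt_of_mul_lt_mul_right hlt hL.le⟩
  norm_cast at this
  omega

theorem volume_Icc_inter_Ioo_add_zmultiples_le {L u v : ℝ} (hL : 0 < L) (huv : u ≤ v) (b c : ℝ) :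
    volume (Icc u v ∩ (Ioo b c + (zmultiples L : Set ℝ))) ≤
      ENNReal.ofReal (((v - u + (c - b)) / L + 1) * (c - b)) := by
  rcases le_or_gt c b with hcb | hbc
  · simp [Ioo_eq_empty hcb.not_gt]
  -- only the translates `Ioo b c + j * L` with `j` in this range meet `Icc u v`
  set J := Finset.Ioo ⌊(u - c) / L⌋ ⌈(v - b) / L⌉
  have hcover : Icc u v ∩ (Ioo b c + (zmultiples L : Set ℝ)) ⊆
      ⋃ j ∈ J, Ioo (b + j * L) (c + j * L) := by
    rintro x ⟨⟨hxu, hxv⟩, hx⟩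
    obtain ⟨j, hjb, hjc⟩ := mem_add_zmultiples_iff.mp hx
    refine mem_biUnion (Finset.mem_Ioo.mpr ⟨?_, ?_⟩) ⟨by linarith, by linarith⟩
    · exact Int.floor_lt.mpr (by rw [div_lt_iff₀ hL]; linarith)
    · exact Int.lt_ceil.mpr (by rw [lt_div_iff₀ hL]; linarith)
  have hcard : (J.card : ℝ) ≤ (v - u + (c - b)) / L + 1 := by
    have hceil := Int.ceil_lt_add_one ((v - b) / L)
    have hfloor := Int.sub_one_lt_floor ((u - c) / L)
    have hpos : 0 ≤ (v - u + (c - b)) / L := div_nonneg (by linarith) hL.le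
    have hdiff : (v - b) / L - (u - c) / L = (v - u + (c - b)) / L := by ring
    rw [Int.card_Ioo, ← Int.cast_natCast, Int.toNat_eq_max]
    push_cast
    exact max_le (by linarith) (by linarith)
  calc volume (Icc u v ∩ (Ioo b c + (zmultiples L : Set ℝ)))
      ≤ ∑ j ∈ J, volume (Ioo (b + j * L) (c + j * L)) :=
        (measure_mono hcover).trans (measure_biUnion_finset_le _ _)
    _ = ENNReal.ofReal (J.card * (c - b)) := by
        simp [Real.volume_Ioo, ENNReal.ofReal_mul]
    _ ≤ _ := ENNReal.ofReal_le_ofReal (mul_le_mul_of_nonneg_right hcard (by linarith))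

theorem exists_mem_forall_mem_of_tsum_measure_diff_lt {α ι : Type*} [MeasurableSpace α]
    [Countable ι] {μ : Measure α} {W : Set α} {G : ι → Set α}
    (h : ∑' i, μ (W \ G i) < μ W) : ∃ t ∈ W, ∀ i, t ∈ G i := by
  by_contra! hW
  have hcover : W ⊆ ⋃ i, W \ G i := fun t ht ↦
    let ⟨i, hi⟩ := hW t ht
    mem_iUnion.mpr ⟨i, ht, hi⟩
  exact (measure_mono hcover |>.trans (measure_iUnion_le _)).not_gt h

noncomputable section

namespace AffineCopies

def period (k : ℕ) : ℝ := 2⁻¹ ^ k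

def margin (k : ℕ) : ℝ := period k * 2⁻¹ ^ (k + 6)

def cutoff (β : ℕ → ℝ) (k : ℕ) : ℕ := sInf {m | β m ≤ margin k}

def gap (β : ℕ → ℝ) (k : ℕ) : ℝ := margin k / (cutoff β k + 1)

def levelSet (β : ℕ → ℝ) (k : ℕ) : Set ℝ :=
  Icc 0 (period k - gap β k) + (zmultiples (period k) : Set ℝ)

def universalSet (β : ℕ → ℝ) : Set ℝ := Icc 0 1 ∩ ⋂ k, levelSet β k

def window : Set ℝ := Icc (1 / 4) (3 / 4)

/-- Keeping `t` at distance `margin k` from the gaps absorbs every `γ m` with `m ≥ cutoff β k`;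
the smaller `m` are checked one by one. -/
def goodAt (β γ : ℕ → ℝ) (k : ℕ) : Set ℝ :=
  {t | t ∈ Icc (margin k) (period k - gap β k - margin k) + (zmultiples (period k) : Set ℝ) ∧
    ∀ m < cutoff β k, t + γ m ∈ levelSet β k}

variable (β : ℕ → ℝ)

theorem period_pos (k : ℕ) : 0 < period k := by unfold period; positivity

theorem period_le_one (k : ℕ) : period k ≤ 1 := pow_le_one₀ (by norm_num) (by norm_num)

theorem margin_pos (k : ℕ) : 0 < margin k := by unfold margin; positivity [period_pos k]

theorem gap_pos (k : ℕ) : 0 < gap β k := by unfold gap; positivity [margin_pos k]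

theorem cutoff_add_one_mul_gap (k : ℕ) : (cutoff β k + 1) * gap β k = margin k := by
  unfold gap; field_simp

theorem gap_le_margin (k : ℕ) : gap β k ≤ margin k := by
  unfold gap
  exact div_le_self (margin_pos k).le (by simp)

theorem three_mul_margin_le_period (k : ℕ) : 3 * margin k ≤ period k := by
  have : (2⁻¹ : ℝ) ^ (k + 6) ≤ 2⁻¹ ^ 6 :=
    pow_le_pow_of_le_one (by norm_num) (by norm_num) (by omega)
  unfold margin
  nlinarith [period_pos k]

theorem volume_window_inter_preimage_add_le {L : ℝ} (hL : 0 < L) (hL₁ : L ≤ 1)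
    (γ : ℝ) {b c : ℝ} (hbc : b ≤ c) (hcb : c - b ≤ L) :
    volume (window ∩ (· + γ) ⁻¹' (Ioo b c + (zmultiples L : Set ℝ))) ≤
      ENNReal.ofReal (5 / 2 / L * (c - b)) := by
  have htranslate : window = (· + γ) ⁻¹' Icc (1 / 4 + γ) (3 / 4 + γ) := by
    simp [window]
  rw [htranslate, ← preimage_inter, measure_preimage_add_right]
  refine (volume_Icc_inter_Ioo_add_zmultiples_le hL (by linarith) b c).trans
    (ENNReal.ofReal_le_ofReal (mul_le_mul_of_nonneg_right ?_ (by linarith)))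
  rw [div_add_one hL.ne', div_le_div_iff_of_pos_right hL]
  linarith

theorem isClosed_universalSet : IsClosed (universalSet β) :=
  isClosed_Icc.inter (isClosed_iInter fun _ ↦ isClosed_Icc_add_zmultiples _ _ _)

theorem isNowhereDense_universalSet : IsNowhereDense (universalSet β) := by
  rw [(isClosed_universalSet β).isNowhereDense_iff, interior_eq_empty_iff_dense_compl,
    Metric.dense_iff]
  intro x ε hε
  obtain ⟨k, hk⟩ := exists_pow_lt_of_lt_one hε (by norm_num : (2⁻¹ : ℝ) < 1)
  obtain ⟨y, hyx, hy⟩ := exists_abs_sub_le_notMem_Icc_add_zmultiples (period_pos k)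
    (by linarith [gap_pos β k] : period k - gap β k < 0 + period k) x
  refine ⟨y, ?_, fun hyA ↦ hy (mem_iInter.mp hyA.2 k)⟩
  rw [Metric.mem_ball, Real.dist_eq]
  exact hyx.trans_lt hk

variable {β}

theorem apply_cutoff_le_margin (hβ : Tendsto β atTop (nhds 0)) (k : ℕ) :
    β (cutoff β k) ≤ margin k :=
  Nat.sInf_mem ((hβ.eventually (ge_mem_nhds (margin_pos k))).exists)

theorem add_mem_levelSet_of_mem_goodAt (hanti : Antitone β) (hβ : Tendsto β atTop (nhds 0))
    {γ : ℕ → ℝ} (hγ : ∀ m, |γ m| ≤ β m) {k : ℕ} {t : ℝ} (ht : t ∈ goodAt β γ k) (m : ℕ) :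
    t + γ m ∈ levelSet β k := by
  rcases lt_or_ge m (cutoff β k) with hm | hm
  · exact ht.2 m hm
  · refine add_mem_Icc_add_of_abs_le (by simpa using ht.1) ?_
    exact (hγ m).trans ((hanti hm).trans (apply_cutoff_le_margin hβ k))

theorem window_diff_goodAt_subset (γ : ℕ → ℝ) (k : ℕ) :
    window \ goodAt β γ k ⊆
      (window ∩ (Ioo (period k - gap β k - margin k) (margin k + period k) +
        (zmultiples (period k) : Set ℝ))) ∪
      ⋃ m ∈ Finset.range (cutoff β k), window ∩ (· + γ m) ⁻¹'
        (Ioo (period k - gap β k) (0 + period k) + (zmultiples (period k) : Set ℝ)) := by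
  rintro t ⟨htW, htbad⟩
  have hL := period_pos k
  by_cases htm : t ∈ Icc (margin k) (period k - gap β k - margin k) +
      (zmultiples (period k) : Set ℝ)
  · obtain ⟨m, hm, htγ⟩ : ∃ m < cutoff β k, t + γ m ∉ levelSet β k := by
      simp only [goodAt, mem_ofPred_eq, not_and, not_forall, exists_prop] at htbad
      exact htbad htm
    refine .inr (mem_biUnion (Finset.mem_range.mpr hm) ⟨htW, ?_⟩)
    exact (mem_Icc_add_zmultiples_or_mem_Ioo_add_zmultiples hL _ _ _).resolve_left htγ
  · exact .inl ⟨htW, (mem_Icc_add_zmultiples_or_mem_Ioo_add_zmultiples hL _ _ _).resolve_left htm⟩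

theorem volume_diff_goodAt_le (γ : ℕ → ℝ) (k : ℕ) :
    volume (window \ goodAt β γ k) ≤ ENNReal.ofReal (2⁻¹ ^ k / 8) := by
  set L := period k
  set r := margin k
  set g := gap β k
  set n := cutoff β k
  have hL : 0 < L := period_pos k
  have hg : 0 < g := gap_pos β k
  have hgr : g ≤ r := gap_le_margin β k
  have h3r : 3 * r ≤ L := three_mul_margin_le_period k
  calc volume (window \ goodAt β γ k)
      ≤ ENNReal.ofReal (5 / 2 / L * (r + L - (L - g - r))) +
          ∑ m ∈ Finset.range n, ENNReal.ofReal (5 / 2 / L * (0 + L - (L - g))) := by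
        refine (measure_mono (window_diff_goodAt_subset γ k)).trans
          ((measure_union_le _ _).trans (add_le_add ?_ ?_))
        · simpa using volume_window_inter_preimage_add_le hL (period_le_one k) 0
            (by linarith) (by linarith)
        · refine (measure_biUnion_finset_le _ _).trans (Finset.sum_le_sum fun m _ ↦ ?_)
          exact volume_window_inter_preimage_add_le hL (period_le_one k) (γ m)
            (by linarith) (by linarith)
    _ = ENNReal.ofReal (15 / 2 * (r / L)) := by
        rw [Finset.sum_const, Finset.card_range, nsmul_eq_mul, ← ENNReal.ofReal_natCast,
          ← ENNReal.ofReal_mul n.cast_nonneg,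
          ← ENNReal.ofReal_add (mul_nonneg (by positivity) (by linarith))
            (mul_nonneg n.cast_nonneg (mul_nonneg (by positivity) (by linarith)))]
        congr 1
        have hng : (n + 1) * g = r := cutoff_add_one_mul_gap β k
        rw [← hng]
        field_simp
        ring
    _ ≤ ENNReal.ofReal (2⁻¹ ^ k / 8) := by
        refine ENNReal.ofReal_le_ofReal ?_
        rw [show r / L = 2⁻¹ ^ (k + 6) from mul_div_cancel_left₀ _ hL.ne', pow_add]
        nlinarith [pow_pos (by norm_num : (0 : ℝ) < 2⁻¹) k]

theorem exists_forall_add_mem_universalSet (hanti : Antitone β) (hβ : Tendsto β atTop (nhds 0))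
    {γ : ℕ → ℝ} (hγβ : ∀ m, |γ m| ≤ β m) (hγ : ∀ m, |γ m| ≤ 1 / 4) :
    ∃ t, ∀ m, t + γ m ∈ universalSet β := by
  have hsum : ∑' k, volume (window \ goodAt β γ k) < volume window :=
    calc ∑' k, volume (window \ goodAt β γ k)
        ≤ ∑' k : ℕ, ENNReal.ofReal (2⁻¹ ^ k / 8) := ENNReal.tsum_le_tsum (volume_diff_goodAt_le γ)
      _ = ENNReal.ofReal (1 / 4) := by
        have hsummable := (summable_geometric_of_lt_one (by norm_num) (by norm_num :
          (2⁻¹ : ℝ) < 1)).div_const 8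
        rw [← ENNReal.ofReal_tsum_of_nonneg (fun k ↦ by positivity) hsummable, tsum_div_const,
          tsum_geometric_inv_two]
        norm_num
      _ < volume window := by
        rw [window, Real.volume_Icc, ENNReal.ofReal_lt_ofReal_iff (by norm_num)]
        norm_num
  obtain ⟨t, ⟨ht₁, ht₂⟩, htgood⟩ := exists_mem_forall_mem_of_tsum_measure_diff_lt hsum
  refine ⟨t, fun m ↦ ⟨?_, mem_iInter.mpr fun k ↦
    add_mem_levelSet_of_mem_goodAt hanti hβ hγβ (htgood k) m⟩⟩
  obtain ⟨hγ₁, hγ₂⟩ := abs_le.mp (hγ m)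
  exact ⟨by linarith, by linarith⟩

end AffineCopies

end

open AffineCopies in
theorem exists_closed_nowhereDense_containing_affine_copies
    (β : ℕ → ℝ) (hanti : StrictAnti β) (hlim : Tendsto β atTop (nhds 0)) :
    ∃ A : Set ℝ, IsClosed A ∧ IsNowhereDense A ∧ A ⊆ Icc 0 1 ∧
      ∀ α : ℕ → ℝ, Tendsto α atTop (nhds 0) →
        (∃ C : ℝ, 0 < C ∧ ∀ m, |α m| ≤ C * β m) →
        ∃ δ t : ℝ, 0 < δ ∧ ∀ m, t + δ * α m ∈ A := by
  refine ⟨universalSet β, isClosed_universalSet β, isNowhereDense_universalSet β,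
    inter_subset_left, ?_⟩
  rintro α - ⟨C, hC, hαC⟩
  have hβ_nonneg : ∀ m, 0 ≤ β m := fun m ↦
    nonneg_of_mul_nonneg_right ((abs_nonneg _).trans (hαC m)) hC
  -- rescaling by `δ` makes `γ m = δ * α m` dominated by `β m` and by `1 / 4`
  set δ := (C * (1 + 4 * β 0))⁻¹
  have h4β : 0 < 1 + 4 * β 0 := by linarith [hβ_nonneg 0]
  have hδ : 0 < δ := by positivity
  have hγ : ∀ m, |δ * α m| ≤ β m / (1 + 4 * β 0) := fun m ↦
    calc |δ * α m| = δ * |α m| := by rw [abs_mul, abs_of_pos hδ]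
      _ ≤ δ * (C * β m) := mul_le_mul_of_nonneg_left (hαC m) hδ.le
      _ = β m / (1 + 4 * β 0) := by simp only [δ]; field_simp
  obtain ⟨t, ht⟩ := exists_forall_add_mem_universalSet hanti.antitone hlim
    (fun m ↦ (hγ m).trans (div_le_self (hβ_nonneg m) (by linarith [hβ_nonneg 0])))
    (fun m ↦ (hγ m).trans <| (div_le_iff₀ h4β).mpr <| by
      linarith [hanti.antitone (Nat.zero_le m)])
  exact ⟨δ, t, hδ, ht⟩
end
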